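/- Let h : ℝ^n → ℝ and s ∈ {−1,+1}^n be such that for every index q, h is monotone nondecreasing in coordinate q if s_q = +1 and monotone nonincreasing in coordinate q if s_q = −1. Let W ∈ ℝ^{n×m}, b ∈ ℝ^n, and let j be an index with s_q · W_{q,j} ≥ 0 for every q. Then the function v ↦ h(σ(W v + b)) from ℝ^m to ℝ is monotone nondecreasing in coordinate j, where σ(t) = max(t,0) is applied entrywise (ReLU). -/

import Mathlib

noncomputable section

/-- The ReLU activation function. -/
def relu (t : ℝ) : ℝ := max t 0

/-- `f : ℝ^m → ℝ` is monotone nondecreasing in coordinate `j`. -/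
def MonoIncAtF {m : ℕ} (f : (Fin m → ℝ) → ℝ) (j : Fin m) : Prop :=
  ∀ (u : Fin m → ℝ) (a a' : ℝ), a ≤ a' →
    f (Function.update u j a) ≤ f (Function.update u j a')

/-- `f : ℝ^m → ℝ` is monotone nonincreasing in coordinate `j`. -/
def MonoDecAtF {m : ℕ} (f : (Fin m → ℝ) → ℝ) (j : Fin m) : Prop :=
  ∀ (u : Fin m → ℝ) (a a' : ℝ), a ≤ a' →
    f (Function.update u j a') ≤ f (Function.update u j a)

/-! Moving the `j`-th input from `a` to `a'` shifts the `q`-th pre-activation by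
`W q j * (a' - a)`, whose sign is that of `s q`; ReLU preserves the order, so every hidden
coordinate moves in the direction in which `h` is nondecreasing. Replacing the hidden
coordinates one at a time then shows that `h` does not decrease. -/

open Function Matrix

theorem relu_monotone : Monotone relu := fun _ _ h => max_le_max_right 0 h

theorem le_of_forall_update_le {ι α β : Type*} [Fintype ι] [DecidableEq ι] [Preorder β]
    {f : (ι → α) → β} {g g' : ι → α}
    (hstep : ∀ i (u : ι → α), f (update u i (g i)) ≤ f (update u i (g' i))) : f g ≤ f g' := by
  suffices ∀ t : Finset ι, f g ≤ f (t.piecewise g' g) by simpa using this Finset.univ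
  intro t
  induction t using Finset.induction with
  | empty => simp
  | insert i t hi ih =>
    calc f g ≤ f (t.piecewise g' g) := ih
      _ = f (update (t.piecewise g' g) i (g i)) := by
        rw [← t.piecewise_eq_of_notMem g' g hi, update_eq_self]
      _ ≤ f ((insert i t).piecewise g' g) := by
        rw [Finset.piecewise_insert]; exact hstep i _

theorem Matrix.mulVec_update_sub_mulVec_update {ι κ R : Type*} [Fintype κ] [DecidableEq κ]
    [CommRing R] (W : Matrix ι κ R) (u : κ → R) (j : κ) (c c' : R) (q : ι) :
    (W *ᵥ update u j c') q - (W *ᵥ update u j c) q = W q j * (c' - c) := by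
  simp only [mulVec, dotProduct]
  rw [← Finset.sum_sub_distrib, Finset.sum_eq_single j]
  · simp [mul_sub]
  · intro i _ hij; simp [update_of_ne hij]
  · simp

/-- If `h` is coordinatewise monotone according to the sign
vector `s ∈ {−1, +1}^n` and `s q * W q j ≥ 0` for every `q`, then
`v ↦ h (σ (W v + b))` is monotone nondecreasing in coordinate `j`. -/
theorem statement_2 {n m : ℕ} (h : (Fin n → ℝ) → ℝ) (s : Fin n → ℝ)
    (hs : ∀ q, s q = 1 ∨ s q = -1)
    (hmono : ∀ q, (s q = 1 → MonoIncAtF h q) ∧ (s q = -1 → MonoDecAtF h q))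
    (W : Matrix (Fin n) (Fin m) ℝ) (b : Fin n → ℝ) (j : Fin m)
    (hW : ∀ q, 0 ≤ s q * W q j) :
    MonoIncAtF (fun v => h fun q => relu (W.mulVec v q + b q)) j := by
  intro u a a' haa
  refine le_of_forall_update_le fun q x => ?_
  have hdiff := W.mulVec_update_sub_mulVec_update u j a a' q
  have hsW := hW q
  rcases hs q with hsq | hsq
  · exact (hmono q).1 hsq x _ _ (relu_monotone (by rw [hsq] at hsW; nlinarith))
  · exact (hmono q).2 hsq x _ _ (relu_monotone (by rw [hsq] at hsW; nlinarith))
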